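/- For any trigonometric polynomial f of degree R, the first derivative satisfies f'(θ) = ∑_{μ=1}^{2R} f(θ + θ_μ) · (-1)^{μ+1}/(4R sin²(θ_μ/2)), where θ_μ = (2μ-1)π/(2R). -/

import Mathlib

/-!
Both sides are linear in `f`, so it suffices to check the rule on `e^{ilθ}` for `|l| ≤ R`, i.e.
`∑_μ w_μ e^{ilθ_μ} = il`. The numbers `z = e^{-iθ_μ}` satisfy `z^{2R} = -1`, and
`(z - 1)² = -4 sin²(θ_μ/2) z`; summing a weighted geometric series then gives the discrete Fourier
expansion `w_μ = (i/2R) ∑_{k=-R}^{R-1} k z^k` of the weights. The nodes `e^{iθ_μ}` are the `2R`-th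
roots of `-1`, so `∑_μ e^{imθ_μ}` vanishes unless `2R ∣ m`. For `|l| ≤ R` this leaves a single
frequency `k` in `∑_μ w_μ e^{ilθ_μ}`: `k = l`, or `k = -R` when `l = R` (using `e^{2Riθ_μ} = -1`).
-/

open Complex Finset
open scoped Real

theorem sum_range_natCast_mul_pow_mul_sub_one_sq {K : Type*} [CommRing K] (z : K) (n : ℕ) :
    (∑ j ∈ range n, (j : K) * z ^ j) * (z - 1) ^ 2 =
      ((n : K) - 1) * z ^ (n + 1) - n * z ^ n + z := by
  induction n with
  | zero => simp
  | succ n ih =>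
    rw [sum_range_succ, add_mul, ih]
    push_cast
    ring

theorem sum_Ico_intCast_mul_zpow_mul_sub_one_sq {K : Type*} [Field K] {R : ℕ} {z : K} (hz : z ≠ 0)
    (hz2R : z ^ (2 * R) = -1) :
    (∑ k ∈ Ico (-R : ℤ) R, (k : K) * z ^ k) * (z - 1) ^ 2 = -2 * z ^ (R + 1) := by
  have hzR : (z ^ R)⁻¹ = -z ^ R := by
    have : z ^ R ≠ 0 := pow_ne_zero R hz
    field_simp
    linear_combination hz2R
  have hreindex : ∑ k ∈ Ico (-R : ℤ) R, (k : K) * z ^ k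
      = (z ^ R)⁻¹ * ∑ j ∈ range (2 * R), ((j : K) * z ^ j - R * z ^ j) := by
    rw [Int.Ico_eq_finset_map, sum_map, mul_sum, show (R - -R : ℤ).toNat = 2 * R by omega]
    refine sum_congr rfl fun j _ => ?_
    simp only [Function.Embedding.trans_apply, Nat.castEmbedding_apply, addLeftEmbedding_apply]
    rw [zpow_add₀ hz, zpow_neg, zpow_natCast, zpow_natCast]
    push_cast
    ring
  have hweighted := sum_range_natCast_mul_pow_mul_sub_one_sq z (2 * R)
  have hgeom := geom_sum_mul z (2 * R)
  rw [pow_succ z, hz2R] at hweighted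
  rw [hz2R] at hgeom
  rw [hreindex, sum_sub_distrib, ← mul_sum, hzR]
  push_cast at hweighted
  linear_combination (-z ^ R) * (hweighted - R * (z - 1) * hgeom)

theorem exp_mul_I_sub_one_sq (z : ℂ) :
    (exp (z * I) - 1) ^ 2 = -4 * sin (z / 2) ^ 2 * exp (z * I) := by
  have hhalf : exp (z * I) = exp (z / 2 * I) ^ 2 := by
    rw [← exp_nat_mul]; push_cast; ring_nf
  rw [hhalf, sin, show -(z / 2) * I = -(z / 2 * I) by ring, exp_neg]
  set v := exp (z / 2 * I)
  have : v ≠ 0 := exp_ne_zero _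
  field_simp
  linear_combination 4 * (v ^ 2 - 1) ^ 2 * I_sq

noncomputable def shiftAngle (R μ : ℕ) : ℝ := (2 * μ - 1) * π / (2 * R)

noncomputable def shiftWeight (R μ : ℕ) : ℝ :=
  (-1) ^ (μ + 1) / (4 * R * Real.sin (shiftAngle R μ / 2) ^ 2)

section ShiftRule

variable {R : ℕ}

theorem exp_I_mul_shiftAngle_pow (hR : R ≠ 0) (μ : ℕ) :
    exp (I * shiftAngle R μ) ^ R = I * (-1) ^ (μ + 1) := by
  have harg : (R : ℂ) * (I * shiftAngle R μ) = μ * (π * I) - π / 2 * I := by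
    unfold shiftAngle; push_cast; field_simp
  rw [← exp_nat_mul, harg, exp_sub, exp_nat_mul, exp_pi_mul_I, exp_pi_div_two_mul_I,
    div_eq_iff I_ne_zero, pow_succ]
  linear_combination (-1 : ℂ) ^ μ * I_sq

theorem exp_I_mul_shiftAngle_pow_two_mul (hR : R ≠ 0) (μ : ℕ) :
    exp (I * shiftAngle R μ) ^ (2 * R) = -1 := by
  have hsign : ((-1 : ℂ) ^ (μ + 1)) ^ 2 = 1 := by rw [pow_right_comm, neg_one_sq, one_pow]
  rw [pow_mul', exp_I_mul_shiftAngle_pow hR]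
  linear_combination ((-1 : ℂ) ^ (μ + 1)) ^ 2 * I_sq - hsign

theorem sum_exp_I_mul_shiftAngle_zpow (hR : R ≠ 0) {m : ℤ} (hm : ¬ (2 * R : ℤ) ∣ m) :
    ∑ μ ∈ Icc 1 (2 * R), exp (I * shiftAngle R μ) ^ m = 0 := by
  set ω := exp (2 * π * I / (2 * R : ℕ))
  have hω : IsPrimitiveRoot ω (2 * R) := isPrimitiveRoot_exp (2 * R) (by omega)
  have hnode (j : ℕ) : exp (I * shiftAngle R (1 + j)) = exp (I * shiftAngle R 1) * ω ^ j := by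
    rw [← exp_nat_mul, ← exp_add]
    congr 1
    unfold shiftAngle
    push_cast
    field_simp
    ring
  have hne : ω ^ m ≠ 1 := (hω.zpow_eq_one_iff_dvd m).not.mpr (by exact_mod_cast hm)
  rw [← Ico_add_one_right_eq_Icc, sum_Ico_eq_sum_range, add_tsub_cancel_right]
  simp_rw [hnode, mul_zpow, ← zpow_natCast ω, ← zpow_mul, mul_comm _ m, zpow_mul, zpow_natCast,
    ← mul_sum, geom_sum_eq hne, ← zpow_natCast, ← zpow_mul, mul_comm m, zpow_mul, zpow_natCast,
    hω.pow_eq_one, one_zpow, sub_self, zero_div, mul_zero]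

theorem shiftWeight_eq_sum (hR : R ≠ 0) (μ : ℕ) :
    (shiftWeight R μ : ℂ) =
      I / (2 * R) * ∑ k ∈ Ico (-R : ℤ) R, (k : ℂ) * exp (-(I * shiftAngle R μ)) ^ k := by
  rw [shiftWeight]
  push_cast
  set θ := shiftAngle R μ
  set z := exp (-(I * θ))
  have hz0 : z ≠ 0 := exp_ne_zero _
  have hzR : z ^ R = -I * (-1) ^ (μ + 1) := by
    have hpow : (I * (-1) ^ (μ + 1)) ^ 2 = -1 := by
      rw [← exp_I_mul_shiftAngle_pow hR, ← pow_mul', exp_I_mul_shiftAngle_pow_two_mul hR]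
    rw [show z = (exp (I * θ))⁻¹ from exp_neg _, inv_pow, exp_I_mul_shiftAngle_pow hR]
    exact inv_eq_of_mul_eq_one_right (by linear_combination -hpow)
  have hz2R : z ^ (2 * R) = -1 := by
    rw [show z = (exp (I * θ))⁻¹ from exp_neg _, inv_pow, exp_I_mul_shiftAngle_pow_two_mul hR,
      inv_neg, inv_one]
  have hsq : (z - 1) ^ 2 = -4 * sin (θ / 2) ^ 2 * z := by
    rw [show z = exp (-θ * I) by rw [neg_mul, mul_comm], exp_mul_I_sub_one_sq, neg_div, sin_neg,
      neg_sq]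
  have hsin : sin ((θ : ℂ) / 2) ≠ 0 := by
    intro h
    have : z = 1 := by simpa [h, sub_eq_zero] using hsq
    norm_num [this] at hz2R
  have hkey : (∑ k ∈ Ico (-R : ℤ) R, (k : ℂ) * z ^ k) * sin (θ / 2) ^ 2 * 2 = z ^ R := by
    refine mul_right_cancel₀ (mul_ne_zero (by norm_num : (-2 : ℂ) ≠ 0) hz0) ?_
    linear_combination sum_Ico_intCast_mul_zpow_mul_sub_one_sq hz0 hz2R -
      (∑ k ∈ Ico (-R : ℤ) R, (k : ℂ) * z ^ k) * hsq
  have hR' : (R : ℂ) ≠ 0 := by exact_mod_cast hR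
  field_simp
  linear_combination -2 * I * hkey - 2 * I * hzR + 2 * (-1 : ℂ) ^ (μ + 1) * I_sq

theorem sum_Ico_mul_sum_exp_I_mul_shiftAngle_zpow (hR : R ≠ 0) {l : ℤ}
    (hl : l ∈ Icc (-R : ℤ) R) :
    ∑ k ∈ Ico (-R : ℤ) R, (k : ℂ) * ∑ μ ∈ Icc 1 (2 * R), exp (I * shiftAngle R μ) ^ (l - k) =
      2 * R * l := by
  rw [mem_Icc] at hl
  have hvanish : ∀ k ∈ Ico (-R : ℤ) R, k ≠ l → k ≠ -R ∨ l ≠ R →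
      (k : ℂ) * ∑ μ ∈ Icc 1 (2 * R), exp (I * shiftAngle R μ) ^ (l - k) = 0 := by
    intro k hk hkl hend
    rw [mem_Ico] at hk
    refine mul_eq_zero_of_right _ (sum_exp_I_mul_shiftAngle_zpow hR fun hdvd => ?_)
    have := Int.eq_zero_of_dvd_of_natAbs_lt_natAbs hdvd (by omega)
    omega
  have hcard : ((Icc 1 (2 * R)).card : ℂ) = 2 * R := by simp
  rcases hl.2.lt_or_eq with hlR | rfl
  · rw [sum_eq_single_of_mem l (by rw [mem_Ico]; omega)
      fun k hk hkl => hvanish k hk hkl (Or.inr hlR.ne)]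
    simp only [sub_self, zpow_zero, sum_const, nsmul_one, hcard]
    ring
  · rw [sum_eq_single_of_mem (-(R : ℤ)) (by rw [mem_Ico]; omega)
      fun k hk hkR => hvanish k hk (by rintro rfl; rw [mem_Ico] at hk; omega) (Or.inl hkR)]
    have hexp (μ : ℕ) : exp (I * shiftAngle R μ) ^ ((R : ℤ) - -R) = -1 := by
      rw [show (R : ℤ) - -R = (2 * R : ℕ) by push_cast; ring, zpow_natCast,
        exp_I_mul_shiftAngle_pow_two_mul hR]
    simp only [hexp, sum_const, nsmul_eq_mul, hcard]
    push_cast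
    ring

theorem sum_shiftWeight_mul_exp (hR : R ≠ 0) {l : ℤ} (hl : l ∈ Icc (-R : ℤ) R) :
    ∑ μ ∈ Icc 1 (2 * R), (shiftWeight R μ : ℂ) * exp (I * l * shiftAngle R μ) = I * l := by
  have hexpand (μ : ℕ) : (shiftWeight R μ : ℂ) * exp (I * l * shiftAngle R μ) =
      I / (2 * R) * ∑ k ∈ Ico (-R : ℤ) R, (k : ℂ) * exp (I * shiftAngle R μ) ^ (l - k) := by
    rw [shiftWeight_eq_sum hR, mul_assoc, sum_mul]
    congr 1
    refine sum_congr rfl fun k _ => ?_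
    rw [exp_neg, inv_zpow', show I * l * shiftAngle R μ = l * (I * shiftAngle R μ) by ring,
      exp_int_mul, mul_assoc, ← zpow_add₀ (exp_ne_zero _), neg_add_eq_sub]
  simp_rw [hexpand, ← mul_sum]
  rw [sum_comm]
  simp_rw [← mul_sum]
  rw [sum_Ico_mul_sum_exp_I_mul_shiftAngle_zpow hR hl]
  have hR' : (R : ℂ) ≠ 0 := by exact_mod_cast hR
  field_simp

end ShiftRule

theorem hasDerivAt_sum_mul_exp (s : Finset ℤ) (c : ℤ → ℂ) (θ : ℝ) :
    HasDerivAt (fun θ : ℝ => ∑ k ∈ s, c k * exp (I * k * θ))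
      (∑ k ∈ s, c k * (I * k) * exp (I * k * θ)) θ := by
  refine HasDerivAt.fun_sum fun k _ => ?_
  have hlin : HasDerivAt (fun x : ℂ => I * k * x) (I * k) θ := by
    simpa using (hasDerivAt_id (θ : ℂ)).const_mul (I * k)
  simpa [mul_comm, mul_assoc, mul_left_comm] using (hlin.cexp.comp_ofReal).const_mul (c k)

theorem sum_mul_exp_shift_rule {ι : Type*} (s : Finset ℤ) (c : ℤ → ℂ) (t : Finset ι) (x : ι → ℝ)
    (w : ι → ℂ) (hw : ∀ k ∈ s, ∑ μ ∈ t, w μ * exp (I * k * x μ) = I * k) (θ : ℝ) :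
    ∑ k ∈ s, c k * (I * k) * exp (I * k * θ) =
      ∑ μ ∈ t, (∑ k ∈ s, c k * exp (I * k * ↑(θ + x μ))) * w μ := by
  simp_rw [sum_mul]
  rw [sum_comm]
  refine sum_congr rfl fun k hk => ?_
  have hsplit (μ : ι) : c k * exp (I * k * ↑(θ + x μ)) * w μ =
      c k * exp (I * k * θ) * (w μ * exp (I * k * x μ)) := by
    rw [ofReal_add, mul_add, exp_add]
    ring
  rw [sum_congr rfl fun μ _ => hsplit μ, ← mul_sum, hw k hk]
  ring

theorem first_order_gpsr_modified (R : ℕ) (hR : 1 ≤ R) (c : ℤ → ℂ)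
    (f : ℝ → ℂ)
    (hf : ∀ θ : ℝ, f θ = ∑ k ∈ Finset.Icc (-(R : ℤ)) R, c k * Complex.exp (Complex.I * k * θ))
    (θpt : ℕ → ℝ) (hθ : ∀ μ : ℕ, θpt μ = (2 * μ - 1) * Real.pi / (2 * R)) :
    ∀ θ : ℝ, deriv f θ =
      ∑ μ ∈ Finset.Icc 1 (2 * R), f (θ + θpt μ) *
        (((-1 : ℝ) ^ (μ + 1) / (4 * R * Real.sin (θpt μ / 2) ^ 2) : ℝ) : ℂ) := by
  intro θ
  obtain rfl : f = fun θ : ℝ => ∑ k ∈ Icc (-(R : ℤ)) R, c k * exp (I * k * θ) := funext hf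
  obtain rfl : θpt = shiftAngle R := funext hθ
  rw [(hasDerivAt_sum_mul_exp _ c θ).deriv]
  exact sum_mul_exp_shift_rule _ c _ _ (fun μ => shiftWeight R μ)
    (fun k hk => sum_shiftWeight_mul_exp (by omega) hk) θ
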